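/- arXiv:1505.05475 — 2 statements merged into one kernel-verified Lean document; each statement's English description precedes it below -/
import Mathlib

section
/- Let G be a bipartite graph (with parts P and L) in which every cycle has length at least 2m for some m ≥ 3. Extend G to a graph G' by adding a new path of length m−1 between two vertices x and y of G that lie at distance at least m+1 in G (or in different components), where the internal path vertices are new and alternate between the two parts, each new vertex being adjacent only to its neighbors on the path. Then every cycle of G' has length at least 2m. -/
/-!
A cycle of `G'` avoiding the new vertices is a cycle of `G`. A cycle through a new vertex passes
through both neighbours of each new vertex it visits (they have degree two), so walking back along
the new path it uses the edge `e` from `x` to the first new vertex. Removing `e` from the cycle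
leaves a walk from that vertex to `x` avoiding `e`. The potential which is `min (dist x v) (m + 1)`
on `G` and grows by one per step along the new path from `y` back to the first new vertex changes
by at most one along every edge other than `e`, so this walk has length at least `2m - 1`.
-/

open SimpleGraph

namespace SimpleGraph

variable {V W : Type*} {G : SimpleGraph V}

lemma Walk.le_add_length_of_forall_adj {f : V → ℕ∞} (hf : ∀ a b, G.Adj a b → f a ≤ f b + 1)
    {u v : V} (p : G.Walk u v) : f u ≤ f v + p.length := by
  induction p with
  | nil => simp
  | @cons a b c h p ih =>
    calc f a ≤ f b + 1 := hf a b h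
      _ ≤ f c + p.length + 1 := by gcongr
      _ = f c + (p.cons h).length := by push_cast [Walk.length_cons]; ring

lemma Walk.IsCycle.exists_walk_deleteEdges_of_snd_eq {u v : V} {C : G.Walk u u}
    (hC : C.IsCycle) (hv : C.snd = v) :
    ∃ q : (G.deleteEdges {s(u, v)}).Walk v u, q.length + 1 = C.length := by
  cases C with
  | nil => exact absurd hC Walk.not_isCycle_nil
  | cons h q =>
    rw [Walk.snd_cons] at hv
    subst hv
    have hq := ((Walk.cons_isCycle_iff q h).mp hC).2
    exact ⟨q.toDeleteEdge _ hq, by simp⟩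

lemma Walk.IsCycle.exists_walk_deleteEdges [DecidableEq V] {u a b : V} {C : G.Walk u u}
    (hC : C.IsCycle) (he : s(a, b) ∈ C.edges) :
    ∃ q : (G.deleteEdges {s(a, b)}).Walk b a, q.length + 1 = C.length := by
  have ha := C.fst_mem_support_of_mem_edges he
  have hC' := hC.rotate ha
  have hb : b ∈ (C.rotate a ha).toSubgraph.neighborSet a := by
    rw [Walk.toSubgraph_rotate]
    exact Walk.adj_toSubgraph_iff_mem_edges.mpr he
  rw [hC'.neighborSet_toSubgraph_endpoint] at hb
  rcases hb with hb | hb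
  · simpa using hC'.exists_walk_deleteEdges_of_snd_eq hb.symm
  · simpa using
      hC'.reverse.exists_walk_deleteEdges_of_snd_eq ((Walk.snd_reverse _).trans hb.symm)

lemma Walk.IsCycle.exists_toSubgraph_adj {u v : V} {C : G.Walk u u} (hC : C.IsCycle)
    (hv : v ∈ C.support) {P : V → Prop} (q : V) (hq : ∀ w, G.Adj v w → P w ∨ w = q) :
    ∃ w, C.toSubgraph.Adj v w ∧ P w := by
  by_contra! h
  have hsub : C.toSubgraph.neighborSet v ⊆ {q} := fun w hw =>
    (hq w (C.toSubgraph.adj_sub hw)).resolve_left (h w hw)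
  have := Set.ncard_le_ncard hsub
  rw [hC.ncard_neighborSet_toSubgraph_eq_two hv, Set.ncard_singleton] at this
  omega

lemma Walk.IsCycle.exists_isCycle_of_support_subset_range {H : SimpleGraph W} (f : G ↪g H)
    {u : W} {C : H.Walk u u} (hC : C.IsCycle) (hs : ∀ v ∈ C.support, v ∈ Set.range f) :
    ∃ (a : V) (C₀ : G.Walk a a), C₀.IsCycle ∧ C₀.length = C.length := by
  have hmap := C.map_induce hs
  have hind : (C.induce _ hs).IsCycle := Walk.IsCycle.of_map (hmap ▸ hC)
  refine ⟨_, (C.induce _ hs).map f.isoInduceRange.symm.toHom,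
    hind.map f.isoInduceRange.symm.injective, ?_⟩
  have hlen := congrArg Walk.length hmap
  rw [Walk.length_map] at hlen
  exact (Walk.length_map _ _).trans hlen

structure IsPathAttachment (G : SimpleGraph V) (x y : V) (n : ℕ)
    (G' : SimpleGraph (V ⊕ Fin n)) : Prop where
  adj_inl_inl : ∀ u v, G'.Adj (.inl u) (.inl v) ↔ G.Adj u v
  adj_inl_inr : ∀ u k, G'.Adj (.inl u) (.inr k) ↔ (u = x ∧ (k : ℕ) = 0) ∨ (u = y ∧ (k : ℕ) + 1 = n)
  adj_inr_inr : ∀ k l, G'.Adj (.inr k) (.inr l) ↔ (k : ℕ) + 1 = l ∨ (l : ℕ) + 1 = k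

namespace IsPathAttachment

variable {x y : V} {n : ℕ} {G' : SimpleGraph (V ⊕ Fin n)}

def inlEmbedding (hG' : IsPathAttachment G x y n G') : G ↪g G' :=
  ⟨Function.Embedding.inl, hG'.adj_inl_inl _ _⟩

lemma exists_forall_adj_inr (hG' : IsPathAttachment G x y n G') (k : Fin n) :
    ∃ q, ∀ w, G'.Adj (.inr k) w →
      ((w = .inl x ∧ (k : ℕ) = 0) ∨ ∃ l : Fin n, w = .inr l ∧ (l : ℕ) + 1 = k) ∨ w = q := by
  refine ⟨if h : (k : ℕ) + 1 < n then .inr ⟨k + 1, h⟩ else .inl y, ?_⟩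
  rintro (u | l) hw
  · rcases (hG'.adj_inl_inr u k).mp hw.symm with ⟨rfl, hk⟩ | ⟨rfl, hk⟩
    · exact .inl (.inl ⟨rfl, hk⟩)
    · exact .inr (by rw [dif_neg (by omega)])
  · rcases (hG'.adj_inr_inr k l).mp hw with hl | hl
    · exact .inr (by rw [dif_pos (by omega)]; exact congrArg _ (Fin.ext hl.symm))
    · exact .inl (.inr ⟨l, rfl, hl⟩)

lemma mem_edges_of_inr_mem_support (hG' : IsPathAttachment G x y n G') {a : V ⊕ Fin n}
    {C : G'.Walk a a} (hC : C.IsCycle) {k : Fin n} (hk : .inr k ∈ C.support) :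
    s(.inl x, .inr ⟨0, k.pos⟩) ∈ C.edges := by
  rw [← Sym2.eq_swap, ← Walk.adj_toSubgraph_iff_mem_edges]
  induction hj : (k : ℕ) generalizing k with
  | zero =>
    obtain ⟨q, hq⟩ := hG'.exists_forall_adj_inr k
    obtain ⟨w, hadj, ⟨rfl, -⟩ | ⟨l, -, hl⟩⟩ := hC.exists_toSubgraph_adj hk q hq
    · rwa [show k = ⟨0, k.pos⟩ from Fin.ext hj] at hadj
    · omega
  | succ j ih =>
    obtain ⟨q, hq⟩ := hG'.exists_forall_adj_inr k
    obtain ⟨w, hadj, ⟨-, hk0⟩ | ⟨l, rfl, hl⟩⟩ := hC.exists_toSubgraph_adj hk q hq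
    · omega
    · exact ih (Walk.mem_support_of_adj_toSubgraph hadj.symm) (by omega)

lemma add_le_length_of_walk_deleteEdges (hG' : IsPathAttachment G x y n G') {d : ℕ}
    (hd : (d : ℕ∞) ≤ G.edist x y) (h0 : 0 < n)
    (q : (G'.deleteEdges {s(.inl x, .inr ⟨0, h0⟩)}).Walk (.inr ⟨0, h0⟩) (.inl x)) :
    n + d ≤ q.length := by
  -- `f v` bounds from below the length of any walk from `v` to `.inl x` avoiding the deleted edge.
  let f : V ⊕ Fin n → ℕ∞ :=
    Sum.elim (fun v => min (G.edist x v) d) (fun k => ((n + d - k : ℕ) : ℕ∞))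
  have hf : ∀ a b, (G'.deleteEdges {s(.inl x, .inr ⟨0, h0⟩)}).Adj a b → f a ≤ f b + 1 := by
    rintro (u | k) (v | l) hab <;> rw [deleteEdges_adj, Set.mem_singleton_iff] at hab
    · have hle : G.edist x u ≤ G.edist x v + 1 := by
        rw [← G.edist_eq_one_iff_adj.mpr ((hG'.adj_inl_inl u v).mp hab.1).symm]
        exact G.edist_triangle
      calc min (G.edist x u) d ≤ min (G.edist x v + 1) (d + 1) := min_le_min hle le_self_add
        _ = f (.inl v) + 1 := min_add_add_right _ _ _
    · calc f (.inl u) ≤ d := min_le_right _ _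
        _ ≤ f (.inr l) + 1 := by simp only [f, Sum.elim_inr]; exact_mod_cast (by omega)
    · rcases (hG'.adj_inl_inr v k).mp hab.1.symm with ⟨rfl, hk⟩ | ⟨rfl, hk⟩
      · exact absurd (by rw [Sym2.eq_swap]; congr; exact Fin.ext hk) hab.2
      · simp only [f, Sum.elim_inl, Sum.elim_inr, min_eq_right hd]
        exact_mod_cast (by omega)
    · simp only [f, Sum.elim_inr]
      have := (hG'.adj_inr_inr k l).mp hab.1
      exact_mod_cast (by omega)
  have hx : f (.inl x) = 0 := by simp [f, edist_self]
  have := q.le_add_length_of_forall_adj hf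
  rw [hx, zero_add] at this
  exact_mod_cast (show ((n + d - 0 : ℕ) : ℕ∞) ≤ q.length from this)

lemma le_length_of_isCycle (hG' : IsPathAttachment G x y n G') {g d : ℕ}
    (hgirth : ∀ (a : V) (w : G.Walk a a), w.IsCycle → g ≤ w.length)
    (hd : (d : ℕ∞) ≤ G.edist x y) (hg : g ≤ n + d + 1) {a : V ⊕ Fin n} {C : G'.Walk a a}
    (hC : C.IsCycle) : g ≤ C.length := by
  classical
  by_cases hnew : ∃ k, .inr k ∈ C.support
  · obtain ⟨k, hk⟩ := hnew
    obtain ⟨q, hq⟩ := hC.exists_walk_deleteEdges (hG'.mem_edges_of_inr_mem_support hC hk)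
    have := hG'.add_le_length_of_walk_deleteEdges hd k.pos q
    omega
  · push Not at hnew
    have hs : ∀ v ∈ C.support, v ∈ Set.range hG'.inlEmbedding := by
      rintro (v | k) hv
      · exact ⟨v, rfl⟩
      · exact absurd hv (hnew k)
    obtain ⟨b, C₀, hC₀, hlen⟩ := hC.exists_isCycle_of_support_subset_range _ hs
    exact hlen ▸ hgirth b C₀ hC₀

end IsPathAttachment

end SimpleGraph

theorem stmt_0_general {V : Type*} (G : SimpleGraph V) (m : ℕ)
    (hgirth : ∀ (a : V) (w : G.Walk a a), w.IsCycle → 2 * m ≤ w.length)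
    (x y : V)
    (hfar : ¬ G.Reachable x y ∨ m + 1 ≤ G.dist x y)
    (G' : SimpleGraph (V ⊕ Fin (m - 2)))
    (hG'1 : ∀ u v : V, G'.Adj (Sum.inl u) (Sum.inl v) ↔ G.Adj u v)
    (hG'2 : ∀ (u : V) (k : Fin (m - 2)),
      G'.Adj (Sum.inl u) (Sum.inr k) ↔
        ((u = x ∧ (k : ℕ) = 0) ∨ (u = y ∧ (k : ℕ) = m - 3)))
    (hG'3 : ∀ k l : Fin (m - 2),
      G'.Adj (Sum.inr k) (Sum.inr l) ↔ ((k : ℕ) + 1 = l ∨ (l : ℕ) + 1 = k)) :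
    ∀ (a : V ⊕ Fin (m - 2)) (w : G'.Walk a a), w.IsCycle → 2 * m ≤ w.length := by
  have hG' : G.IsPathAttachment x y (m - 2) G' :=
    ⟨hG'1, fun u k => (hG'2 u k).trans (or_congr_right (and_congr_right fun _ => by omega)),
      hG'3⟩
  have hd : ((m + 1 : ℕ) : ℕ∞) ≤ G.edist x y := by
    rcases hfar with hxy | hxy
    · simp [edist_eq_top_of_not_reachable hxy]
    · rw [← (Reachable.of_dist_ne_zero (by omega)).coe_dist_eq_edist]
      exact_mod_cast hxy
  exact fun a w hw => hG'.le_length_of_isCycle hgirth hd (by omega) hw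

/-- Adding a new path of length `m-1` (with `m-2` new internal
vertices, alternating between the two parts) between two vertices `x, y` of a
bipartite graph `G` without cycles of length `< 2m` that are at distance at
least `m+1` (or in different components) yields a graph all of whose cycles
have length at least `2m`. -/
theorem stmt_0 {V : Type*} (G : SimpleGraph V) (m : ℕ) (hm : 3 ≤ m)
    (c : V → Bool) (hbip : ∀ u v, G.Adj u v → c u ≠ c v)
    (hgirth : ∀ (a : V) (w : G.Walk a a), w.IsCycle → 2 * m ≤ w.length)
    (x y : V)
    (hfar : ¬ G.Reachable x y ∨ m + 1 ≤ G.dist x y)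
    (G' : SimpleGraph (V ⊕ Fin (m - 2)))
    (hG'1 : ∀ u v : V, G'.Adj (Sum.inl u) (Sum.inl v) ↔ G.Adj u v)
    (hG'2 : ∀ (u : V) (k : Fin (m - 2)),
      G'.Adj (Sum.inl u) (Sum.inr k) ↔
        ((u = x ∧ (k : ℕ) = 0) ∨ (u = y ∧ (k : ℕ) = m - 3)))
    (hG'3 : ∀ k l : Fin (m - 2),
      G'.Adj (Sum.inr k) (Sum.inr l) ↔ ((k : ℕ) + 1 = l ∨ (l : ℕ) + 1 = k))
    (c' : V ⊕ Fin (m - 2) → Bool)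
    (hc' : ∀ v : V, c' (Sum.inl v) = c v)
    (hbip' : ∀ a b, G'.Adj a b → c' a ≠ c' b) :
    ∀ (a : V ⊕ Fin (m - 2)) (w : G'.Walk a a), w.IsCycle → 2 * m ≤ w.length :=
  stmt_0_general G m hgirth x y hfar G' hG'1 hG'2 hG'3
end

section
/- Let Γ = (V, τ, *) be a geometry over I satisfying property (F) for a Coxeter matrix M: any two vertices whose types are non-adjacent in M (m_{τ(v1),τ(v2)} = 2) are incident. Extend Γ by one new vertex x of type i ∉ τ(X) for a flag X, making x incident exactly to the elements of X and to all vertices whose type is non-adjacent to i. Then the resulting structure is again a geometry over I satisfying property (F), and X ∪ {x} is a flag. -/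
/-- Procedure A: extending a geometry satisfying property (F) by
a single new vertex of type i ∉ τ(X), incident exactly to the flag X and to
all vertices of types non-adjacent to i, yields again a geometry over I
satisfying property (F), in which X ∪ {x} is a flag. -/
theorem stmt_9 {V I : Type*} (M : I → I → ℕ∞)
    (hMsymm : ∀ a b : I, M a b = M b a) (hMdiag : ∀ a : I, M a a = 1)
    (hMoff : ∀ a b : I, a ≠ b → 2 ≤ M a b)
    (τ : V → I) (star : V → V → Prop)
    (hsymm : ∀ x y : V, star x y → star y x)
    (htyp : ∀ x y : V, τ x = τ y → (star x y ↔ x = y))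
    (hF : ∀ v₁ v₂ : V, M (τ v₁) (τ v₂) = 2 → star v₁ v₂)
    (X : Set V) (hX : ∀ x ∈ X, ∀ y ∈ X, x ≠ y → star x y)
    (i : I) (hi : i ∉ τ '' X)
    (τ' : Option V → I)
    (hτ'new : τ' none = i) (hτ'old : ∀ v : V, τ' (some v) = τ v)
    (star' : Option V → Option V → Prop)
    (hs'old : ∀ u v : V, star' (some u) (some v) ↔ star u v)
    (hs'new₁ : ∀ v : V, star' none (some v) ↔ (v ∈ X ∨ M i (τ v) = 2))
    (hs'new₂ : ∀ v : V, star' (some v) none ↔ (v ∈ X ∨ M i (τ v) = 2))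
    (hs'refl : star' none none) :
    (∀ a b : Option V, star' a b → star' b a) ∧
    (∀ a b : Option V, τ' a = τ' b → (star' a b ↔ a = b)) ∧
    (∀ a b : Option V, M (τ' a) (τ' b) = 2 → star' a b) ∧
    (∀ a ∈ insert none (some '' X), ∀ b ∈ insert none (some '' X),
      a ≠ b → star' a b) := by
  refine ⟨?_, ?_, ?_, ?_⟩
  · rintro (_|u) (_|v) h
    · exact h
    · exact (hs'new₂ v).mpr ((hs'new₁ v).mp h)
    · exact (hs'new₁ u).mpr ((hs'new₂ u).mp h)
    · exact (hs'old v u).mpr (hsymm u v ((hs'old u v).mp h))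
  · rintro (_|u) (_|v) h
    · simp [hs'refl]
    · rw [hτ'new, hτ'old] at h
      constructor
      · intro hst
        rcases (hs'new₁ v).mp hst with hv | hM
        · exact absurd ⟨v, hv, h.symm⟩ hi
        · rw [← h, hMdiag] at hM; exact absurd hM (by decide)
      · intro hc; exact absurd hc (by simp)
    · rw [hτ'new, hτ'old] at h
      constructor
      · intro hst
        rcases (hs'new₂ u).mp hst with hu | hM
        · exact absurd ⟨u, hu, h⟩ hi
        · rw [h, hMdiag] at hM; exact absurd hM (by decide)
      · intro hc; exact absurd hc (by simp)
    · rw [hτ'old, hτ'old] at h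
      rw [hs'old, htyp u v h, Option.some_inj]
  · rintro (_|u) (_|v) h
    · exact hs'refl
    · rw [hτ'new, hτ'old] at h
      exact (hs'new₁ v).mpr (Or.inr h)
    · rw [hτ'new, hτ'old] at h
      exact (hs'new₂ u).mpr (Or.inr (by rw [hMsymm]; exact h))
    · rw [hτ'old, hτ'old] at h
      exact (hs'old u v).mpr (hF u v h)
  · rintro a ha b hb hab
    rcases ha with rfl | ⟨u, hu, rfl⟩
    · rcases hb with rfl | ⟨v, hv, rfl⟩
      · exact absurd rfl hab
      · exact (hs'new₁ v).mpr (Or.inl hv)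
    · rcases hb with rfl | ⟨v, hv, rfl⟩
      · exact (hs'new₂ u).mpr (Or.inl hu)
      · exact (hs'old u v).mpr (hX u hu v hv (fun h => hab (by rw [h])))
end
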